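/- arXiv:2406.01484 — 3 statements merged into one kernel-verified Lean document; each statement's English description precedes it below -/
import Mathlib

section
/- Let f : ℝ^d → ℝ be Lipschitz and let δ, μ ≥ 0. If g ∈ ∂_μ f_δ(x) (the Goldstein μ-subdifferential of the randomized smoothing f_δ at x), then g ∈ ∂_{μ+δ} f(x). -/
open MeasureTheory

/-- The uniform probability measure on the closed unit ball of `ℝ^d`. -/
noncomputable def unifBall (d : ℕ) : Measure (EuclideanSpace ℝ (Fin d)) :=
  ProbabilityTheory.cond volume (Metric.closedBall 0 1)

/-- Randomized smoothing of `f` with radius `δ`. -/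
noncomputable def smoothed {d : ℕ} (f : EuclideanSpace ℝ (Fin d) → ℝ) (δ : ℝ)
    (x : EuclideanSpace ℝ (Fin d)) : ℝ :=
  ∫ u, f (x + δ • u) ∂(unifBall d)

/-- The Clarke subdifferential of `f` at `x`: the convex hull of all limits of
gradients `∇f(x_s)` at points of differentiability with `x_s → x`. -/
noncomputable def clarke {d : ℕ} (f : EuclideanSpace ℝ (Fin d) → ℝ)
    (x : EuclideanSpace ℝ (Fin d)) : Set (EuclideanSpace ℝ (Fin d)) :=
  convexHull ℝ {g | ∃ u : ℕ → EuclideanSpace ℝ (Fin d),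
    Filter.Tendsto u Filter.atTop (nhds x) ∧ (∀ k, DifferentiableAt ℝ f (u k)) ∧
    Filter.Tendsto (fun k => gradient f (u k)) Filter.atTop (nhds g)}

/-- The Goldstein `δ`-subdifferential: `conv(∪_{y ∈ B(x,δ)} ∂f(y))`. -/
noncomputable def goldstein {d : ℕ} (f : EuclideanSpace ℝ (Fin d) → ℝ) (δ : ℝ)
    (x : EuclideanSpace ℝ (Fin d)) : Set (EuclideanSpace ℝ (Fin d)) :=
  convexHull ℝ (⋃ y ∈ Metric.closedBall x δ, clarke f y)

namespace GoldsteinAux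

open Filter Metric Set
open scoped Topology

variable {d : ℕ}

/-- The base set of the Clarke subdifferential (before taking convex hull). -/
def Dset (f : EuclideanSpace ℝ (Fin d) → ℝ) (y : EuclideanSpace ℝ (Fin d)) :
    Set (EuclideanSpace ℝ (Fin d)) :=
  {g | ∃ u : ℕ → EuclideanSpace ℝ (Fin d),
    Filter.Tendsto u Filter.atTop (nhds y) ∧ (∀ k, DifferentiableAt ℝ f (u k)) ∧
    Filter.Tendsto (fun k => gradient f (u k)) Filter.atTop (nhds g)}

/-- The base set of the Goldstein subdifferential. -/
def Aset (f : EuclideanSpace ℝ (Fin d) → ℝ) (x : EuclideanSpace ℝ (Fin d)) (r : ℝ) :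
    Set (EuclideanSpace ℝ (Fin d)) :=
  ⋃ y ∈ Metric.closedBall x r, Dset f y

lemma clarke_eq (f : EuclideanSpace ℝ (Fin d) → ℝ) (y : EuclideanSpace ℝ (Fin d)) :
    clarke f y = convexHull ℝ (Dset f y) := rfl

lemma Aset_mono (f : EuclideanSpace ℝ (Fin d) → ℝ) (x : EuclideanSpace ℝ (Fin d))
    {r r' : ℝ} (h : r ≤ r') : Aset f x r ⊆ Aset f x r' := by
  refine Set.iUnion₂_subset fun y hy => ?_
  exact Set.subset_biUnion_of_mem (closedBall_subset_closedBall h hy)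

lemma goldstein_eq (f : EuclideanSpace ℝ (Fin d) → ℝ) (r : ℝ) (x : EuclideanSpace ℝ (Fin d)) :
    goldstein f r x = convexHull ℝ (Aset f x r) := by
  apply Set.Subset.antisymm
  · apply convexHull_min _ (convex_convexHull ℝ _)
    refine Set.iUnion₂_subset fun y hy => ?_
    rw [clarke_eq]
    exact convexHull_min
      (fun p hp => subset_convexHull _ _ (Set.mem_biUnion hy hp)) (convex_convexHull _ _)
  · apply convexHull_mono
    refine Set.iUnion₂_subset fun y hy => ?_
    exact fun p hp => Set.mem_biUnion hy (subset_convexHull _ _ hp)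

section Lip

variable {d : ℕ} {f : EuclideanSpace ℝ (Fin d) → ℝ} {L : ℝ}

lemma lipschitz_of_bound (hL : 0 ≤ L) (hf : ∀ x y, |f x - f y| ≤ L * ‖x - y‖) :
    LipschitzWith L.toNNReal f := by
  apply LipschitzWith.of_dist_le_mul
  intro a b
  rw [Real.dist_eq, Real.coe_toNNReal L hL, dist_eq_norm]
  exact hf a b

lemma norm_gradient_le (hL : 0 ≤ L) (hf : ∀ x y, |f x - f y| ≤ L * ‖x - y‖)
    (z : EuclideanSpace ℝ (Fin d)) : ‖gradient f z‖ ≤ L := by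
  have : ‖gradient f z‖ = ‖fderiv ℝ f z‖ := by
    rw [gradient]
    exact LinearIsometryEquiv.norm_map _ _
  rw [this]
  by_cases hd : DifferentiableAt ℝ f z
  · have := norm_fderiv_le_of_lipschitz ℝ (lipschitz_of_bound hL hf) (x₀ := z)
    rwa [Real.coe_toNNReal L hL] at this
  · rw [fderiv_zero_of_not_differentiableAt hd]
    simpa using hL

lemma norm_le_of_mem_Dset (hL : 0 ≤ L) (hf : ∀ x y, |f x - f y| ≤ L * ‖x - y‖)
    {y p : EuclideanSpace ℝ (Fin d)} (hp : p ∈ GoldsteinAux.Dset f y) : ‖p‖ ≤ L := by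
  obtain ⟨u, -, -, hgrad⟩ := hp
  have : Filter.Tendsto (fun k => ‖gradient f (u k)‖) Filter.atTop (nhds ‖p‖) :=
    hgrad.norm
  exact le_of_tendsto this (Filter.Eventually.of_forall fun k => norm_gradient_le hL hf _)

end Lip

variable {d : ℕ} {f : EuclideanSpace ℝ (Fin d) → ℝ} {x : EuclideanSpace ℝ (Fin d)}

/-- Key closure property: a limit of gradients at points asymptotically within distance `r`
of `x` belongs to `Aset f x r`. -/
lemma Aset_limit {r : ℝ} (hr : 0 ≤ r) (z : ℕ → EuclideanSpace ℝ (Fin d))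
    (hzdiff : ∀ k, DifferentiableAt ℝ f (z k)) {e : ℕ → ℝ}
    (hzd : ∀ k, dist (z k) x ≤ r + e k) (he : Filter.Tendsto e Filter.atTop (nhds 0))
    {p : EuclideanSpace ℝ (Fin d)}
    (hg : Filter.Tendsto (fun k => gradient f (z k)) Filter.atTop (nhds p)) :
    p ∈ Aset f x r := by
  obtain ⟨N, hN⟩ : ∃ N, ∀ k ≥ N, e k ≤ 1 := by
    have := he.eventually (eventually_le_nhds (by norm_num : (0:ℝ) < 1))
    exact this.exists_forall_of_atTop
  have hmem : ∀ k, z (N + k) ∈ closedBall x (r + 1) := fun k => by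
    have := hzd (N + k)
    have h2 := hN (N + k) (Nat.le_add_right _ _)
    exact mem_closedBall.2 (this.trans (by linarith))
  obtain ⟨y, hy, φ, hφ, hconv⟩ :=
    (isCompact_closedBall x (r + 1)).tendsto_subseq hmem
  have hφtop : Filter.Tendsto (fun k => N + φ k) Filter.atTop Filter.atTop :=
    Filter.tendsto_atTop_mono (fun k => Nat.le_add_left _ _) hφ.tendsto_atTop
  have hyr : dist y x ≤ r := by
    have h1 : Filter.Tendsto (fun k => dist (z (N + φ k)) x) Filter.atTop (nhds (dist y x)) :=
      hconv.dist tendsto_const_nhds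
    have h2 : Filter.Tendsto (fun k => r + e (N + φ k)) Filter.atTop (nhds r) := by
      have := he.comp hφtop
      simpa using tendsto_const_nhds.add this
    exact le_of_tendsto_of_tendsto' h1 h2 fun k => hzd _
  refine Set.mem_biUnion (mem_closedBall.2 hyr) ?_
  exact ⟨fun k => z (N + φ k), hconv, fun k => hzdiff _, hg.comp hφtop⟩

lemma mem_Dset_exists {y p : EuclideanSpace ℝ (Fin d)} (hp : p ∈ Dset f y) {η : ℝ}
    (hη : 0 < η) : ∃ z, DifferentiableAt ℝ f z ∧ dist z y ≤ η ∧ dist (gradient f z) p ≤ η := by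
  obtain ⟨u, hu, hdiff, hgrad⟩ := hp
  have h1 : ∀ᶠ k in Filter.atTop, u k ∈ closedBall y η :=
    hu.eventually (Metric.closedBall_mem_nhds y hη)
  have h2 : ∀ᶠ k in Filter.atTop, gradient f (u k) ∈ closedBall p η :=
    hgrad.eventually (Metric.closedBall_mem_nhds p hη)
  obtain ⟨k, hk1, hk2⟩ := (h1.and h2).exists
  exact ⟨u k, hdiff k, mem_closedBall.1 hk1, mem_closedBall.1 hk2⟩

lemma Aset_limit' {r : ℝ} (hr : 0 ≤ r) {e : ℕ → ℝ} {p : ℕ → EuclideanSpace ℝ (Fin d)}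
    {q : EuclideanSpace ℝ (Fin d)}
    (hmem : ∀ n, p n ∈ Aset f x (r + e n)) (he : Filter.Tendsto e Filter.atTop (nhds 0))
    (hp : Filter.Tendsto p Filter.atTop (nhds q)) : q ∈ Aset f x r := by
  have key : ∀ n : ℕ, ∃ z, DifferentiableAt ℝ f z ∧ dist z x ≤ r + (e n + 1 / (n + 1)) ∧
      dist (gradient f z) (p n) ≤ 1 / (n + 1) := by
    intro n
    obtain ⟨y, hy, hpy⟩ := Set.mem_iUnion₂.1 (hmem n)
    obtain ⟨z, hz1, hz2, hz3⟩ := mem_Dset_exists hpy (Nat.one_div_pos_of_nat (n := n))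
    exact ⟨z, hz1, by
      have := dist_triangle z y x
      have hyx : dist y x ≤ r + e n := mem_closedBall.1 hy
      linarith, hz3⟩
  choose z hzdiff hzd hzg using key
  refine Aset_limit hr z hzdiff hzd ?_ ?_
  · simpa using he.add tendsto_one_div_add_atTop_nhds_zero_nat
  · rw [tendsto_iff_dist_tendsto_zero]
    apply squeeze_zero (fun n => dist_nonneg)
      (g := fun n => 1 / (n + 1) + dist (p n) q)
    · intro n
      calc dist (gradient f (z n)) q ≤ dist (gradient f (z n)) (p n) + dist (p n) q :=
            dist_triangle _ _ _
        _ ≤ 1 / (n + 1) + dist (p n) q := by linarith [hzg n]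
    · have h1 := (tendsto_iff_dist_tendsto_zero).1 hp
      simpa using tendsto_one_div_add_atTop_nhds_zero_nat.add h1

lemma Aset_closed {r : ℝ} (hr : 0 ≤ r) : IsClosed (Aset f x r) := by
  refine IsSeqClosed.isClosed ?_
  intro p q hpmem hp
  exact Aset_limit' hr (e := fun _ => 0) (by simpa using hpmem) tendsto_const_nhds hp

/-- Carathéodory with a fixed number `d+1` of points (allowing zero weights). -/
lemma cara {s : Set (EuclideanSpace ℝ (Fin d))} {g : EuclideanSpace ℝ (Fin d)}
    (hg : g ∈ convexHull ℝ s) :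
    ∃ (w : Fin (d + 1) → ℝ) (z : Fin (d + 1) → EuclideanSpace ℝ (Fin d)),
      (∀ i, 0 ≤ w i) ∧ ∑ i, w i = 1 ∧ (∀ i, z i ∈ s) ∧ ∑ i, w i • z i = g := by
  obtain ⟨ι, hfin, z, w, hss, hai, hpos, hsum, heq⟩ :=
    eq_pos_convex_span_of_mem_convexHull hg
  have hcard : Fintype.card ι ≤ d + 1 := by
    have h1 := hai.card_le_finrank_succ
    have h2 : Module.finrank ℝ (vectorSpan ℝ (Set.range z)) ≤
        Module.finrank ℝ (EuclideanSpace ℝ (Fin d)) := Submodule.finrank_le _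
    have h3 : Module.finrank ℝ (EuclideanSpace ℝ (Fin d)) = d := finrank_euclideanSpace_fin
    omega
  have hne : Nonempty ι := by
    by_contra h
    rw [not_nonempty_iff] at h
    have : (∑ i, w i) = 0 := by simp
    rw [hsum] at this; norm_num at this
  obtain ⟨e⟩ : Nonempty (ι ↪ Fin (d + 1)) :=
    Function.Embedding.nonempty_of_card_le (by simpa using hcard)
  classical
  refine ⟨fun j => ∑ i ∈ Finset.univ.filter (fun i => e i = j), w i,
    fun j => if h : ∃ i, e i = j then z h.choose else z (Classical.arbitrary ι),
      fun j => Finset.sum_nonneg fun i _ => (hpos i).le, ?_, ?_, ?_⟩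
  · rw [Finset.sum_fiberwise_of_maps_to (fun i _ => Finset.mem_univ (e i))]
    exact hsum
  · intro j
    by_cases h : ∃ i, e i = j
    · simp only [dif_pos h]
      exact hss (Set.mem_range_self _)
    · simp only [dif_neg h]
      exact hss (Set.mem_range_self _)
  · rw [← heq]
    rw [← Finset.sum_fiberwise_of_maps_to (fun i _ => Finset.mem_univ (e i))
      (fun i => w i • z i)]
    refine Finset.sum_congr rfl fun j _ => ?_
    rw [Finset.sum_smul]
    refine Finset.sum_congr rfl fun i hi => ?_
    have hij : e i = j := (Finset.mem_filter.1 hi).2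
    have hex : ∃ i', e i' = j := ⟨i, hij⟩
    have : hex.choose = i := e.injective (hex.choose_spec.trans hij.symm)
    simp [dif_pos hex, this]

/-- Intersection of a decreasing family of closures of convex hulls of closed bounded sets. -/
lemma inter_conv {L : ℝ} (S : ℕ → Set (EuclideanSpace ℝ (Fin d)))
    (hdec : ∀ {n m : ℕ}, n ≤ m → S m ⊆ S n)
    (hclosed : ∀ n, IsClosed (S n))
    (hbdd : ∀ p ∈ S 0, ‖p‖ ≤ L)
    {g : EuclideanSpace ℝ (Fin d)}
    (hg : ∀ n, g ∈ closure (convexHull ℝ (S n))) :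
    g ∈ convexHull ℝ (⋂ n, S n) := by
  have hgn : ∀ n : ℕ, ∃ gn ∈ convexHull ℝ (S n), dist g gn < 1 / (n + 1) := fun n =>
    Metric.mem_closure_iff.1 (hg n) _ (Nat.one_div_pos_of_nat)
  choose gn hgn1 hgn2 using hgn
  have hrep := fun n => cara (hgn1 n)
  choose w z hw hwsum hz hzg using hrep
  -- compactness of the parameter space
  have hK1 : IsCompact (Set.pi Set.univ fun _ : Fin (d + 1) => Set.Icc (0:ℝ) 1) :=
    isCompact_univ_pi fun _ => isCompact_Icc
  have hK2 : IsCompact (Set.pi Set.univ fun _ : Fin (d + 1) =>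
      Metric.closedBall (0 : EuclideanSpace ℝ (Fin d)) L) :=
    isCompact_univ_pi fun _ => isCompact_closedBall _ _
  have hmem : ∀ n, (w n, z n) ∈ (Set.pi Set.univ fun _ : Fin (d + 1) => Set.Icc (0:ℝ) 1) ×ˢ
      (Set.pi Set.univ fun _ : Fin (d + 1) =>
        Metric.closedBall (0 : EuclideanSpace ℝ (Fin d)) L) := by
    intro n
    constructor
    · intro i _
      refine ⟨hw n i, ?_⟩
      rw [← hwsum n]
      exact Finset.single_le_sum (fun i _ => hw n i) (Finset.mem_univ i)
    · intro i _
      simpa using hbdd _ (hdec (Nat.zero_le n) (hz n i))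
  obtain ⟨⟨W, Z⟩, -, φ, hφ, hconv⟩ := (hK1.prod hK2).tendsto_subseq hmem
  have hWc : ∀ i, Filter.Tendsto (fun n => w (φ n) i) Filter.atTop (nhds (W i)) := fun i =>
    (((continuous_apply i).comp continuous_fst).tendsto _).comp hconv
  have hZc : ∀ i, Filter.Tendsto (fun n => z (φ n) i) Filter.atTop (nhds (Z i)) := fun i =>
    (((continuous_apply i).comp continuous_snd).tendsto _).comp hconv
  have hW0 : ∀ i, 0 ≤ W i := fun i =>
    ge_of_tendsto (hWc i) (Filter.Eventually.of_forall fun n => hw _ i)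
  have hWsum : ∑ i, W i = 1 := by
    have h1 : Filter.Tendsto (fun n => ∑ i, w (φ n) i) Filter.atTop (nhds (∑ i, W i)) :=
      tendsto_finset_sum _ fun i _ => hWc i
    have h2 : Filter.Tendsto (fun n => ∑ i, w (φ n) i) Filter.atTop (nhds 1) := by
      simpa [hwsum] using (tendsto_const_nhds : Filter.Tendsto (fun _ : ℕ => (1:ℝ))
        Filter.atTop (nhds 1))
    exact tendsto_nhds_unique h1 h2
  have hZmem : ∀ i, Z i ∈ ⋂ n, S n := by
    intro i
    refine Set.mem_iInter.2 fun m => ?_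
    refine (hclosed m).mem_of_tendsto (hZc i) ?_
    filter_upwards [Filter.eventually_ge_atTop m] with n hn
    exact hdec (hn.trans (hφ.le_apply (x := n))) (hz (φ n) i)
  have hZg : ∑ i, W i • Z i = g := by
    have h1 : Filter.Tendsto (fun n => ∑ i, w (φ n) i • z (φ n) i) Filter.atTop
        (nhds (∑ i, W i • Z i)) :=
      tendsto_finset_sum _ fun i _ => (hWc i).smul (hZc i)
    have h2 : Filter.Tendsto (fun n => gn (φ n)) Filter.atTop (nhds g) := by
      rw [tendsto_iff_dist_tendsto_zero]
      apply squeeze_zero (fun n => dist_nonneg) (g := fun n : ℕ => 1 / (n + 1))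
      · intro n
        have hle : dist (gn (φ n)) g < 1 / (φ n + 1) := by
          rw [dist_comm]; exact hgn2 (φ n)
        have : (1 : ℝ) / (φ n + 1) ≤ 1 / (n + 1) := by
          apply one_div_le_one_div_of_le (by positivity)
          have h := hφ.le_apply (x := n)
          have : (n : ℝ) ≤ (φ n : ℝ) := Nat.cast_le.2 h
          linarith
        linarith
      · exact tendsto_one_div_add_atTop_nhds_zero_nat
    have h3 : Filter.Tendsto (fun n => gn (φ n)) Filter.atTop (nhds (∑ i, W i • Z i)) := by
      simpa [hzg] using h1
    exact tendsto_nhds_unique h3 h2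
  rw [← hZg]
  exact (convex_convexHull ℝ _).sum_mem (fun i _ => hW0 i) hWsum
    fun i _ => subset_convexHull _ _ (hZmem i)

instance unifBall_prob (d : ℕ) : IsProbabilityMeasure (unifBall d) := by
  rw [unifBall]
  apply ProbabilityTheory.cond_isProbabilityMeasure_of_finite
  · refine ne_of_gt (lt_of_lt_of_le (measure_ball_pos volume (0 : EuclideanSpace ℝ (Fin d))
      one_pos) (measure_mono Metric.ball_subset_closedBall))
  · exact (isCompact_closedBall _ _).measure_lt_top.ne

lemma ae_unifBall_mem (d : ℕ) :
    ∀ᵐ u ∂(unifBall d), u ∈ Metric.closedBall (0 : EuclideanSpace ℝ (Fin d)) 1 := by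
  rw [unifBall, ProbabilityTheory.cond]
  exact Measure.ae_smul_measure (ae_restrict_mem measurableSet_closedBall) _

lemma unifBall_ac (d : ℕ) : unifBall d ≪ (volume : Measure (EuclideanSpace ℝ (Fin d))) := by
  rw [unifBall, ProbabilityTheory.cond]
  intro s hs
  rw [Measure.smul_apply, smul_eq_mul]
  rw [Measure.restrict_apply₀' measurableSet_closedBall.nullMeasurableSet]
  have : volume (s ∩ Metric.closedBall (0 : EuclideanSpace ℝ (Fin d)) 1) = 0 :=
    measure_mono_null Set.inter_subset_left hs
  rw [this, mul_zero]

lemma ae_diff_translate {f : EuclideanSpace ℝ (Fin d) → ℝ} {L : ℝ}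
    (hL : 0 ≤ L) (hf : ∀ x y, |f x - f y| ≤ L * ‖x - y‖) {δ : ℝ} (hδ : δ ≠ 0)
    (z : EuclideanSpace ℝ (Fin d)) :
    ∀ᵐ u ∂(unifBall d), DifferentiableAt ℝ f (z + δ • u) := by
  have hvol : ∀ᵐ u ∂(volume : Measure (EuclideanSpace ℝ (Fin d))),
      DifferentiableAt ℝ f (z + δ • u) := by
    have hae : ∀ᵐ w ∂(volume : Measure (EuclideanSpace ℝ (Fin d))), DifferentiableAt ℝ f w :=
      (lipschitz_of_bound hL hf).ae_differentiableAt
    rw [ae_iff] at hae ⊢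
    have hset : {u : EuclideanSpace ℝ (Fin d) | ¬DifferentiableAt ℝ f (z + δ • u)} =
        (fun u : EuclideanSpace ℝ (Fin d) => δ • u) ⁻¹'
          ((fun v : EuclideanSpace ℝ (Fin d) => z + v) ⁻¹'
            {w | ¬DifferentiableAt ℝ f w}) := rfl
    rw [hset, Measure.addHaar_preimage_smul volume hδ, measure_preimage_add, hae, mul_zero]
  exact (unifBall_ac d).ae_le hvol

lemma smoothed_zero (f : EuclideanSpace ℝ (Fin d) → ℝ) : smoothed f 0 = f := by
  funext z
  rw [smoothed]
  simp

open InnerProductSpace in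
lemma smoothed_hasGradient {L : ℝ} (hL : 0 ≤ L)
    (hf : ∀ x y : EuclideanSpace ℝ (Fin d), |f x - f y| ≤ L * ‖x - y‖) {δ : ℝ} (hδ : 0 < δ)
    (z : EuclideanSpace ℝ (Fin d)) :
    HasGradientAt (smoothed f δ) (∫ u, gradient f (z + δ • u) ∂(unifBall d)) z := by
  have hlip := lipschitz_of_bound hL hf
  have hcont : Continuous f := hlip.continuous
  have haff : Continuous (fun u : EuclideanSpace ℝ (Fin d) => z + δ • u) :=
    continuous_const.add (continuous_id.const_smul δ)
  have haffm : Measurable (fun u : EuclideanSpace ℝ (Fin d) => z + δ • u) := haff.measurable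
  have key := hasFDerivAt_integral_of_dominated_loc_of_lip (μ := unifBall d) (𝕜 := ℝ)
    (F := fun x u => f (x + δ • u)) (F' := fun u => fderiv ℝ f (z + δ • u)) (x₀ := z)
    (bound := fun _ => L) (s := Metric.ball z 1) (Metric.ball_mem_nhds z one_pos)
    (Filter.Eventually.of_forall fun x =>
      (hcont.comp (continuous_const.add (continuous_id.const_smul δ))).aestronglyMeasurable)
    ?_ (((measurable_fderiv ℝ f).comp haffm).aestronglyMeasurable)
    (Filter.Eventually.of_forall fun u => ?_) (integrable_const L) ?_
  · obtain ⟨hF'int, hderiv⟩ := key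
    have htd : ∀ v : EuclideanSpace ℝ (Fin d),
        (toDual ℝ (EuclideanSpace ℝ (Fin d)) v : EuclideanSpace ℝ (Fin d) →L[ℝ] ℝ)
          = innerSL ℝ v := by
      intro v; ext y; simp [InnerProductSpace.toDual_apply_apply]
    have hfd : ∀ w : EuclideanSpace ℝ (Fin d),
        fderiv ℝ f w = innerSL ℝ (gradient f w) := by
      intro w
      rw [← htd]
      exact ((toDual ℝ _).apply_symm_apply _).symm
    have hGmeas : AEStronglyMeasurable (fun u => gradient f (z + δ • u)) (unifBall d) :=
      (((toDual ℝ (EuclideanSpace ℝ (Fin d))).symm.continuous.measurable).comp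
        ((measurable_fderiv ℝ f).comp haffm)).aestronglyMeasurable
    have hGint : Integrable (fun u => gradient f (z + δ • u)) (unifBall d) :=
      Integrable.mono' (integrable_const L) hGmeas
        (Filter.Eventually.of_forall fun u => norm_gradient_le hL hf _)
    have hswap : (∫ u, fderiv ℝ f (z + δ • u) ∂(unifBall d))
        = toDual ℝ (EuclideanSpace ℝ (Fin d)) (∫ u, gradient f (z + δ • u) ∂(unifBall d)) := by
      rw [htd]
      calc (∫ u, fderiv ℝ f (z + δ • u) ∂(unifBall d))
          = ∫ u, innerSL ℝ (gradient f (z + δ • u)) ∂(unifBall d) := by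
            simp only [hfd]
        _ = innerSL ℝ (∫ u, gradient f (z + δ • u) ∂(unifBall d)) :=
            ContinuousLinearMap.integral_comp_comm _ hGint
    rw [HasGradientAt, HasGradientAtFilter, ← hswap]
    exact hderiv
  · -- integrability of `u ↦ f (z + δ • u)`
    refine Integrable.mono' (integrable_const (|f z| + L * δ))
      ((hcont.comp haff).aestronglyMeasurable) ?_
    filter_upwards [ae_unifBall_mem d] with u hu
    have hu1 : ‖u‖ ≤ 1 := mem_closedBall_zero_iff.1 hu
    have h1 : |f (z + δ • u) - f z| ≤ L * ‖δ • u‖ := by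
      simpa using hf (z + δ • u) z
    have h2 : ‖δ • u‖ ≤ δ := by
      rw [norm_smul, Real.norm_eq_abs, abs_of_pos hδ]
      nlinarith
    have h3 : L * ‖δ • u‖ ≤ L * δ := mul_le_mul_of_nonneg_left h2 hL
    have h4 : |f (z + δ • u)| ≤ |f z| + |f (z + δ • u) - f z| := by
      calc |f (z + δ • u)| = |f z + (f (z + δ • u) - f z)| := by ring_nf
        _ ≤ |f z| + |f (z + δ • u) - f z| := abs_add_le _ _
    rw [Real.norm_eq_abs]
    linarith
  · -- Lipschitz in the parameter
    refine LipschitzWith.lipschitzOnWith ?_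
    apply LipschitzWith.of_dist_le_mul
    intro a b
    rw [Real.dist_eq, dist_eq_norm]
    have := hf (a + δ • u) (b + δ • u)
    rw [add_sub_add_right_eq_sub] at this
    simpa [Real.coe_nnabs, abs_of_nonneg hL] using this
  · -- a.e. differentiability in the parameter
    filter_upwards [ae_diff_translate hL hf hδ.ne' z] with u hu
    have h := hu.hasFDerivAt.comp z ((hasFDerivAt_id z).add_const (δ • u))
    exact h

open InnerProductSpace in
lemma gradient_smoothed_mem {L : ℝ} (hL : 0 ≤ L)
    (hf : ∀ x y : EuclideanSpace ℝ (Fin d), |f x - f y| ≤ L * ‖x - y‖) {δ : ℝ} (hδ : 0 < δ)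
    (x z : EuclideanSpace ℝ (Fin d)) :
    gradient (smoothed f δ) z ∈ closure (convexHull ℝ (Aset f x (dist z x + δ))) := by
  have hgrad := smoothed_hasGradient hL hf hδ z
  have hdiff : DifferentiableAt ℝ (smoothed f δ) z := hgrad.hasFDerivAt.differentiableAt
  have heq : gradient (smoothed f δ) z = ∫ u, gradient f (z + δ • u) ∂(unifBall d) :=
    (hdiff.hasGradientAt).unique hgrad
  rw [heq]
  have haffm : Measurable (fun u : EuclideanSpace ℝ (Fin d) => z + δ • u) :=
    (continuous_const.add (continuous_id.const_smul δ)).measurable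
  have hGmeas : AEStronglyMeasurable (fun u => gradient f (z + δ • u)) (unifBall d) :=
    (((toDual ℝ (EuclideanSpace ℝ (Fin d))).symm.continuous.measurable).comp
      ((measurable_fderiv ℝ f).comp haffm)).aestronglyMeasurable
  have hGint : Integrable (fun u => gradient f (z + δ • u)) (unifBall d) :=
    Integrable.mono' (integrable_const L) hGmeas
      (Filter.Eventually.of_forall fun u => norm_gradient_le hL hf _)
  refine Convex.integral_mem ((convex_convexHull ℝ _).closure) isClosed_closure ?_ hGint
  filter_upwards [ae_unifBall_mem d, ae_diff_translate hL hf hδ.ne' z] with u hu hdu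
  apply subset_closure
  apply subset_convexHull
  have hdist : dist (z + δ • u) x ≤ dist z x + δ := by
    have h1 : dist (z + δ • u) z ≤ δ := by
      rw [dist_eq_norm, add_sub_cancel_left, norm_smul, Real.norm_eq_abs, abs_of_pos hδ]
      have := mem_closedBall_zero_iff.1 hu
      nlinarith
    calc dist (z + δ • u) x ≤ dist (z + δ • u) z + dist z x := dist_triangle _ _ _
      _ ≤ δ + dist z x := by linarith
      _ = dist z x + δ := by ring
  refine Set.mem_biUnion (mem_closedBall.2 hdist) ?_
  exact ⟨fun _ => z + δ • u, tendsto_const_nhds, fun _ => hdu, tendsto_const_nhds⟩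

end GoldsteinAux

/-- Geometric lemma: `∂_μ f_δ(x) ⊆ ∂_{μ+δ} f(x)`. -/
theorem goldstein_smoothed_subset {d : ℕ} (f : EuclideanSpace ℝ (Fin d) → ℝ) (L : ℝ)
    (hL : 0 ≤ L) (hf : ∀ x y, |f x - f y| ≤ L * ‖x - y‖)
    (δ μ : ℝ) (hδ : 0 ≤ δ) (hμ : 0 ≤ μ)
    (x g : EuclideanSpace ℝ (Fin d))
    (hg : g ∈ goldstein (smoothed f δ) μ x) :
    g ∈ goldstein f (μ + δ) x := by
  classical
  rcases eq_or_lt_of_le hδ with hδ0 | hδpos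
  · -- trivial case `δ = 0`
    subst hδ0
    rw [GoldsteinAux.smoothed_zero f] at hg
    rwa [add_zero]
  · -- main case `δ > 0`
    set r : ℝ := μ + δ with hrdef
    have hr0 : 0 ≤ r := add_nonneg hμ hδ
    set S : ℕ → Set (EuclideanSpace ℝ (Fin d)) :=
      fun n => GoldsteinAux.Aset f x (r + 1 / (n + 1)) with hSdef
    have hgc : ∀ n, g ∈ closure (convexHull ℝ (S n)) := by
      intro n
      rw [GoldsteinAux.goldstein_eq] at hg
      have hsub : GoldsteinAux.Aset (smoothed f δ) x μ ⊆ closure (convexHull ℝ (S n)) := by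
        rintro p hp
        obtain ⟨y, hy, hpy⟩ := Set.mem_iUnion₂.1 hp
        obtain ⟨u, hu, hudiff, hugrad⟩ := hpy
        refine isClosed_closure.mem_of_tendsto hugrad ?_
        have hev : ∀ᶠ k in Filter.atTop, u k ∈ Metric.closedBall y (1 / (n + 1)) :=
          hu.eventually (Metric.closedBall_mem_nhds y (Nat.one_div_pos_of_nat))
        filter_upwards [hev] with k hk
        have h1 := GoldsteinAux.gradient_smoothed_mem hL hf hδpos x (u k)
        refine closure_mono (convexHull_mono (GoldsteinAux.Aset_mono f x ?_)) h1
        have h2 : dist (u k) x ≤ dist (u k) y + dist y x := dist_triangle _ _ _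
        have hyx : dist y x ≤ μ := Metric.mem_closedBall.1 hy
        have hky : dist (u k) y ≤ 1 / (n + 1) := Metric.mem_closedBall.1 hk
        rw [hrdef]
        linarith
      exact convexHull_min hsub ((convex_convexHull ℝ _).closure) hg
    have hint : g ∈ convexHull ℝ (⋂ n, S n) := by
      refine GoldsteinAux.inter_conv (L := L) S ?_ ?_ ?_ hgc
      · intro n m hnm
        apply GoldsteinAux.Aset_mono
        have : (1 : ℝ) / (m + 1) ≤ 1 / (n + 1) := by
          apply one_div_le_one_div_of_le (by positivity)
          have : (n : ℝ) ≤ m := Nat.cast_le.2 hnm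
          linarith
        linarith
      · intro n
        exact GoldsteinAux.Aset_closed (by positivity)
      · intro p hp
        obtain ⟨y, hy, hpy⟩ := Set.mem_iUnion₂.1 hp
        exact GoldsteinAux.norm_le_of_mem_Dset hL hf hpy
    rw [GoldsteinAux.goldstein_eq]
    refine convexHull_mono ?_ hint
    intro p hp
    have hmem := Set.mem_iInter.1 hp
    exact GoldsteinAux.Aset_limit' hr0 (e := fun n : ℕ => 1 / (n + 1)) (p := fun _ => p)
      (fun n => hmem n) tendsto_one_div_add_atTop_nhds_zero_nat tendsto_const_nhds
end

section
/- Let f : ℝ^d → ℝ be Lipschitz, δ > 0, and a ∈ (0,1). Then ‖∇f(x)‖_δ ≤ ‖∇f_{aδ}(x)‖_{(1-a)δ}, where ‖∇g(x)‖_η := min{‖g‖ : g ∈ ∂_η g(x)} denotes the minimal norm element of the Goldstein η-subdifferential. -/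
open MeasureTheory

/-- Minimal norm element of the Goldstein `η`-subdifferential: `‖∇f(x)‖_η`. -/
noncomputable def goldsteinNorm {d : ℕ} (f : EuclideanSpace ℝ (Fin d) → ℝ) (η : ℝ)
    (x : EuclideanSpace ℝ (Fin d)) : ℝ :=
  sInf (norm '' goldstein f η x)

section Aux

open Metric Filter Set RealInnerProductSpace

variable {d : ℕ} {f g : EuclideanSpace ℝ (Fin d) → ℝ} {L : ℝ}

private lemma vol_ball_ne_zero :
    (volume (Metric.closedBall (0 : EuclideanSpace ℝ (Fin d)) 1)) ≠ 0 :=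
  (measure_closedBall_pos volume 0 one_pos).ne'

private lemma vol_ball_ne_top :
    (volume (Metric.closedBall (0 : EuclideanSpace ℝ (Fin d)) 1)) ≠ ⊤ :=
  measure_closedBall_lt_top.ne

instance unif_prob : IsProbabilityMeasure (unifBall d) :=
  ProbabilityTheory.cond_isProbabilityMeasure_of_finite vol_ball_ne_zero vol_ball_ne_top

private lemma unif_ae_ball : ∀ᵐ u ∂(unifBall d), ‖u‖ ≤ 1 := by
  rw [unifBall, ProbabilityTheory.cond]
  refine Measure.ae_smul_measure ?_ _
  filter_upwards [ae_restrict_mem measurableSet_closedBall] with u hu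
  simpa using hu

private lemma unif_null {s : Set (EuclideanSpace ℝ (Fin d))} (hs : volume s = 0) :
    unifBall d s = 0 := by
  rw [unifBall, ProbabilityTheory.cond, Measure.smul_apply]
  have : volume.restrict (Metric.closedBall 0 1) s = 0 :=
    le_antisymm ((Measure.restrict_apply_le _ _).trans hs.le) bot_le
  simp [this]

private lemma lip_of (hL : 0 ≤ L) (hf : ∀ x y, |f x - f y| ≤ L * ‖x - y‖) :
    LipschitzWith ⟨L, hL⟩ f := by
  refine LipschitzWith.of_dist_le_mul fun x y => ?_
  rw [Real.dist_eq, dist_eq_norm]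
  exact hf x y

private lemma integrable_comp (hf : Continuous f) (z : EuclideanSpace ℝ (Fin d)) (c : ℝ) :
    Integrable (fun u => f (z + c • u)) (unifBall d) := by
  rw [unifBall, ProbabilityTheory.cond]
  refine Integrable.smul_measure ?_ (ENNReal.inv_ne_top.2 vol_ball_ne_zero)
  exact ((hf.comp (continuous_const.add (continuous_const_smul c))).locallyIntegrable
    ).integrableOn_isCompact (isCompact_closedBall 0 1)

private lemma smoothed_lip (hL : 0 ≤ L) (hf : ∀ x y, |f x - f y| ≤ L * ‖x - y‖) (c : ℝ)
    (x₁ x₂ : EuclideanSpace ℝ (Fin d)) :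
    |smoothed f c x₁ - smoothed f c x₂| ≤ L * ‖x₁ - x₂‖ := by
  have hcont : Continuous f := (lip_of hL hf).continuous
  have h1 := integrable_comp hcont x₁ c
  have h2 := integrable_comp hcont x₂ c
  rw [smoothed, smoothed, ← integral_sub h1 h2]
  calc |∫ u, (f (x₁ + c • u) - f (x₂ + c • u)) ∂(unifBall d)|
      ≤ ∫ u, |f (x₁ + c • u) - f (x₂ + c • u)| ∂(unifBall d) := by
        simpa [Real.norm_eq_abs] using norm_integral_le_integral_norm (μ := unifBall d)
          (fun u => f (x₁ + c • u) - f (x₂ + c • u))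
    _ ≤ ∫ _u, L * ‖x₁ - x₂‖ ∂(unifBall d) := by
        refine integral_mono (h1.sub h2).abs (integrable_const _) fun u => ?_
        simpa [add_sub_add_right_eq_sub] using hf (x₁ + c • u) (x₂ + c • u)
    _ = L * ‖x₁ - x₂‖ := by simp

private lemma fderiv_eq_toDual {w : EuclideanSpace ℝ (Fin d)} (h : DifferentiableAt ℝ f w) :
    fderiv ℝ f w = InnerProductSpace.toDual ℝ _ (gradient f w) :=
  h.hasGradientAt.hasFDerivAt.fderiv

private lemma inner_grad {w v : EuclideanSpace ℝ (Fin d)} (h : DifferentiableAt ℝ f w) :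
    ⟪gradient f w, v⟫ = fderiv ℝ f w v := by
  rw [fderiv_eq_toDual h, InnerProductSpace.toDual_apply_apply]

private lemma grad_bound (hL : 0 ≤ L) (hf : LipschitzWith ⟨L, hL⟩ f)
    {w : EuclideanSpace ℝ (Fin d)}
    (h : DifferentiableAt ℝ f w) : ‖gradient f w‖ ≤ L := by
  have : ‖fderiv ℝ f w‖ ≤ L := norm_fderiv_le_of_lipschitz ℝ hf
  rwa [fderiv_eq_toDual h, LinearIsometryEquiv.norm_map] at this

private lemma slope_tendsto {w v : EuclideanSpace ℝ (Fin d)} (h : DifferentiableAt ℝ g w) :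
    Tendsto (fun k : ℕ => ((k : ℝ) + 1) * (g (w + ((k : ℝ) + 1)⁻¹ • v) - g w)) atTop
      (nhds (⟪gradient g w, v⟫)) := by
  have h1 : HasDerivAt (fun t : ℝ => w + t • v) v 0 := by
    simpa using ((hasDerivAt_id (0:ℝ)).smul_const v).const_add w
  have h2 : HasDerivAt (fun t : ℝ => g (w + t • v)) (fderiv ℝ g w v) 0 := by
    have hw : w + (0:ℝ) • v = w := by simp
    have hF : HasFDerivAt g (fderiv ℝ g w) (w + (0:ℝ) • v) := by
      rw [hw]; exact h.hasFDerivAt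
    exact hF.comp_hasDerivAt (0:ℝ) h1
  have h3 := hasDerivAt_iff_tendsto_slope.1 h2
  have h4 : Tendsto (fun k : ℕ => ((k : ℝ) + 1)⁻¹) atTop (nhds 0) :=
    tendsto_one_div_add_atTop_nhds_zero_nat.congr (by intro k; rw [one_div])
  have h5 : Tendsto (fun k : ℕ => ((k : ℝ) + 1)⁻¹) atTop (nhdsWithin 0 {(0:ℝ)}ᶜ) := by
    refine tendsto_nhdsWithin_of_tendsto_nhds_of_eventually_within _ h4 ?_
    filter_upwards with k
    simp only [mem_compl_iff, mem_singleton_iff]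
    positivity
  have h6 := h3.comp h5
  rw [inner_grad h]
  refine h6.congr fun k => ?_
  simp [slope_def_field, div_eq_inv_mul, mul_comm]

private lemma ae_diff_unif (hL : 0 ≤ L) (hf : LipschitzWith ⟨L, hL⟩ f)
    (z : EuclideanSpace ℝ (Fin d)) {c : ℝ} (hc : c ≠ 0) :
    ∀ᵐ u ∂(unifBall d), DifferentiableAt ℝ f (z + c • u) := by
  have hN : volume {w : EuclideanSpace ℝ (Fin d) | ¬ DifferentiableAt ℝ f w} = 0 := by
    have := hf.ae_differentiableAt (μ := volume)
    rwa [MeasureTheory.ae_iff] at this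
  have hN2 : volume ((fun w : EuclideanSpace ℝ (Fin d) => z + w) ⁻¹'
      {w | ¬ DifferentiableAt ℝ f w}) = 0 := by
    rw [measure_preimage_add]; exact hN
  have hN3 : volume ((fun u : EuclideanSpace ℝ (Fin d) => c • u) ⁻¹'
      ((fun w : EuclideanSpace ℝ (Fin d) => z + w) ⁻¹' {w | ¬ DifferentiableAt ℝ f w})) = 0 := by
    rw [Measure.addHaar_preimage_smul volume hc, hN2, mul_zero]
  have := unif_null (d := d) hN3
  rw [MeasureTheory.ae_iff]
  convert this using 2
  rfl

private lemma key (hL : 0 ≤ L) (hf : ∀ x y, |f x - f y| ≤ L * ‖x - y‖) {c : ℝ} (hc : 0 < c)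
    {z : EuclideanSpace ℝ (Fin d)} (hdiff : DifferentiableAt ℝ (smoothed f c) z)
    (v : EuclideanSpace ℝ (Fin d)) {ε : ℝ} (hε : 0 < ε) :
    ∃ w, dist w z ≤ c ∧ DifferentiableAt ℝ f w ∧
      ⟪gradient (smoothed f c) z, v⟫ ≤ ⟪gradient f w, v⟫ + ε := by
  by_contra hcon
  push_neg at hcon
  set μ := unifBall d with hμ
  have hlip := lip_of hL hf
  have hcont := hlip.continuous
  have hμdiff := ae_diff_unif hL hlip z hc.ne'
  have hμball := unif_ae_ball (d := d)
  set G : ℕ → EuclideanSpace ℝ (Fin d) → ℝ := fun k u =>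
    ((k:ℝ)+1) * (f ((z + ((k:ℝ)+1)⁻¹ • v) + c • u) - f (z + c • u)) with hG
  have hmeas : ∀ k, AEStronglyMeasurable (G k) μ := by
    intro k
    refine Continuous.aestronglyMeasurable ?_
    exact continuous_const.mul
      (((hcont.comp (continuous_const.add (continuous_const_smul c)))).sub
        ((hcont.comp (continuous_const.add (continuous_const_smul c)))))
  have hbound : ∀ k, ∀ᵐ u ∂μ, ‖G k u‖ ≤ L * ‖v‖ := by
    intro k
    filter_upwards with u
    have hk : (0:ℝ) < (k:ℝ) + 1 := by positivity
    have h1 : |f ((z + ((k:ℝ)+1)⁻¹ • v) + c • u) - f (z + c • u)| ≤ L * (((k:ℝ)+1)⁻¹ * ‖v‖) := by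
      have := hf ((z + ((k:ℝ)+1)⁻¹ • v) + c • u) (z + c • u)
      have heq : (z + ((k:ℝ)+1)⁻¹ • v) + c • u - (z + c • u) = ((k:ℝ)+1)⁻¹ • v := by abel
      rw [heq, norm_smul] at this
      simpa [Real.norm_eq_abs, abs_inv, abs_of_pos hk] using this
    rw [hG]
    simp only [Real.norm_eq_abs, abs_mul, abs_of_pos hk]
    calc ((k:ℝ)+1) * |f ((z + ((k:ℝ)+1)⁻¹ • v) + c • u) - f (z + c • u)|
        ≤ ((k:ℝ)+1) * (L * (((k:ℝ)+1)⁻¹ * ‖v‖)) := by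
          exact mul_le_mul_of_nonneg_left h1 hk.le
      _ = L * ‖v‖ := by field_simp
  have hlim : ∀ᵐ u ∂μ, Tendsto (fun k => G k u) atTop
      (nhds (⟪gradient f (z + c • u), v⟫)) := by
    filter_upwards [hμdiff] with u hu
    refine (slope_tendsto hu).congr fun k => ?_
    rw [hG]
    congr 3
    abel
  have hDCT := tendsto_integral_of_dominated_convergence (fun _ => L * ‖v‖) hmeas
    (integrable_const _) hbound hlim
  have hFk : ∀ k, ∫ u, G k u ∂μ =
      ((k:ℝ)+1) * (smoothed f c (z + ((k:ℝ)+1)⁻¹ • v) - smoothed f c z) := by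
    intro k
    simp only [hG]
    rw [smoothed, smoothed, ← integral_sub (integrable_comp hcont _ c)
      (integrable_comp hcont z c), ← integral_const_mul]
  have hTF := slope_tendsto (g := smoothed f c) (v := v) hdiff
  have hDCT' : Tendsto (fun k : ℕ => ((k:ℝ)+1) * (smoothed f c (z + ((k:ℝ)+1)⁻¹ • v)
      - smoothed f c z)) atTop (nhds (∫ u, ⟪gradient f (z + c • u), v⟫ ∂μ)) :=
    hDCT.congr hFk
  have hEq : ⟪gradient (smoothed f c) z, v⟫ = ∫ u, ⟪gradient f (z + c • u), v⟫ ∂μ :=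
    tendsto_nhds_unique hTF hDCT'
  have hintlim : Integrable (fun u => ⟪gradient f (z + c • u), v⟫) μ := by
    refine Integrable.mono' (integrable_const (L * ‖v‖))
      (aestronglyMeasurable_of_tendsto_ae atTop hmeas hlim) ?_
    filter_upwards [hμdiff] with u hu
    calc ‖⟪gradient f (z + c • u), v⟫‖ ≤ ‖gradient f (z + c • u)‖ * ‖v‖ :=
          norm_inner_le_norm _ _
      _ ≤ L * ‖v‖ := mul_le_mul_of_nonneg_right (grad_bound hL hlip hu) (norm_nonneg v)
  have hle : ∫ u, ⟪gradient f (z + c • u), v⟫ ∂μ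
      ≤ ⟪gradient (smoothed f c) z, v⟫ - ε := by
    calc ∫ u, ⟪gradient f (z + c • u), v⟫ ∂μ
        ≤ ∫ _u, (⟪gradient (smoothed f c) z, v⟫ - ε) ∂μ := by
          refine integral_mono_ae hintlim (integrable_const _) ?_
          filter_upwards [hμdiff, hμball] with u h1 h2
          have hdist : dist (z + c • u) z ≤ c := by
            rw [dist_eq_norm]
            have : z + c • u - z = c • u := by abel
            rw [this, norm_smul, Real.norm_eq_abs, abs_of_pos hc]
            calc c * ‖u‖ ≤ c * 1 := mul_le_mul_of_nonneg_left h2 hc.le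
              _ = c := mul_one c
          have := hcon (z + c • u) hdist h1
          linarith
      _ = ⟪gradient (smoothed f c) z, v⟫ - ε := by simp
  rw [← hEq] at hle
  linarith

private lemma base_nonempty (hL : 0 ≤ L) (hg : LipschitzWith ⟨L, hL⟩ g)
    (x : EuclideanSpace ℝ (Fin d)) :
    ∃ p : EuclideanSpace ℝ (Fin d), ∃ u : ℕ → EuclideanSpace ℝ (Fin d),
      Tendsto u atTop (nhds x) ∧ (∀ k, DifferentiableAt ℝ g (u k)) ∧
      Tendsto (fun k => gradient g (u k)) atTop (nhds p) := by
  have hsel : ∀ k : ℕ, ∃ w, dist w x ≤ ((k:ℝ)+1)⁻¹ ∧ DifferentiableAt ℝ g w := by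
    intro k
    by_contra hno
    push_neg at hno
    have hsub : closedBall x ((k:ℝ)+1)⁻¹ ⊆ {w | ¬ DifferentiableAt ℝ g w} := fun w hw =>
      hno w (mem_closedBall.1 hw)
    have hN : volume {w : EuclideanSpace ℝ (Fin d) | ¬ DifferentiableAt ℝ g w} = 0 := by
      have := hg.ae_differentiableAt (μ := volume)
      rwa [MeasureTheory.ae_iff] at this
    have := measure_mono_null hsub hN
    exact absurd this (measure_closedBall_pos volume x (by positivity)).ne'
  choose w hw1 hw2 using hsel
  have hinv : Tendsto (fun k : ℕ => ((k:ℝ)+1)⁻¹) atTop (nhds 0) :=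
    tendsto_one_div_add_atTop_nhds_zero_nat.congr (by intro k; rw [one_div])
  have hwt : Tendsto w atTop (nhds x) := by
    rw [tendsto_iff_dist_tendsto_zero]
    exact squeeze_zero (fun k => dist_nonneg) hw1 hinv
  obtain ⟨p, -, φ, hφ, hp⟩ := (isCompact_closedBall (0 : EuclideanSpace ℝ (Fin d)) L).tendsto_subseq
      (fun k => mem_closedBall_zero_iff.2 (grad_bound hL hg (hw2 k)))
  exact ⟨p, w ∘ φ, hwt.comp hφ.tendsto_atTop, fun k => hw2 _, hp⟩

end Aux

/-- `‖∇f(x)‖_δ ≤ ‖∇f_{aδ}(x)‖_{(1-a)δ}` for `a ∈ (0,1)`. -/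
theorem goldsteinNorm_smoothing {d : ℕ} (f : EuclideanSpace ℝ (Fin d) → ℝ) (L : ℝ)
    (hL : 0 ≤ L) (hf : ∀ x y, |f x - f y| ≤ L * ‖x - y‖)
    (δ a : ℝ) (hδ : 0 < δ) (ha0 : 0 < a) (ha1 : a < 1)
    (x : EuclideanSpace ℝ (Fin d)) :
    goldsteinNorm f δ x ≤ goldsteinNorm (smoothed f (a * δ)) ((1 - a) * δ) x := by
  classical
  open Metric Filter Set RealInnerProductSpace in
  set c := a * δ with hc
  have hcpos : 0 < c := mul_pos ha0 hδ
  set F := smoothed f c with hFdef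
  have hflip : LipschitzWith ⟨L, hL⟩ f := lip_of hL hf
  have hFlip : LipschitzWith ⟨L, hL⟩ F := lip_of hL (smoothed_lip hL hf c)
  have hr0 : 0 ≤ (1 - a) * δ := mul_nonneg (by linarith) hδ.le
  obtain ⟨p0, u0, hu0, hud0, hug0⟩ := base_nonempty hL hFlip x
  have hp0 : p0 ∈ goldstein F ((1 - a) * δ) x := by
    refine subset_convexHull ℝ _ ?_
    refine Set.mem_iUnion₂.2 ⟨x, Metric.mem_closedBall_self hr0, ?_⟩
    exact subset_convexHull ℝ _ ⟨u0, hu0, hud0, hug0⟩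
  rw [goldsteinNorm, goldsteinNorm]
  refine le_csInf ⟨‖p0‖, Set.mem_image_of_mem _ hp0⟩ ?_
  rintro b ⟨g, hg, rfl⟩
  have hGconv : Convex ℝ (closure (goldstein f δ x)) := (convex_convexHull ℝ _).closure
  have hincl : goldstein F ((1 - a) * δ) x ⊆ closure (goldstein f δ x) := by
    rw [goldstein]
    refine convexHull_min (Set.iUnion₂_subset fun y hy => ?_) hGconv
    rw [clarke]
    refine convexHull_min ?_ hGconv
    rintro g' ⟨u, hu, hud, hugrad⟩
    by_contra hnot
    obtain ⟨ℓ, cc, hlt, hccg⟩ :=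
      geometric_hahn_banach_closed_point hGconv isClosed_closure hnot
    set v := (InnerProductSpace.toDual ℝ (EuclideanSpace ℝ (Fin d))).symm ℓ with hv
    have hℓ : ∀ q, inner ℝ v q = ℓ q := fun q => InnerProductSpace.toDual_symm_apply
    have hsel : ∀ k : ℕ, ∃ w', dist w' (u k) ≤ c ∧ DifferentiableAt ℝ f w' ∧
        inner ℝ (gradient F (u k)) v ≤ inner ℝ (gradient f w') v + ((k:ℝ)+1)⁻¹ := fun k =>
      key hL hf hcpos (hud k) v (by positivity)
    choose W hW1 hW2 hW3 using hsel
    obtain ⟨R, hR⟩ := (hu.cauchySeq.isBounded_range).subset_closedBall x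
    have hWball : ∀ k, W k ∈ Metric.closedBall x (c + R) := fun k =>
      Metric.mem_closedBall.2 ((dist_triangle (W k) (u k) x).trans
        (add_le_add (hW1 k) (hR (Set.mem_range_self k))))
    obtain ⟨wbar, -, φ, hφ, hWt⟩ := (isCompact_closedBall x (c + R)).tendsto_subseq hWball
    have hdy : Tendsto (fun k => dist (u k) y) atTop (nhds 0) :=
      tendsto_iff_dist_tendsto_zero.1 hu
    have hwbar_le : dist wbar x ≤ δ := by
      have h1 : Tendsto (fun k => dist (W (φ k)) x) atTop (nhds (dist wbar x)) :=
        hWt.dist tendsto_const_nhds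
      have h2 : Tendsto (fun k => δ + dist (u (φ k)) y) atTop (nhds (δ + 0)) :=
        tendsto_const_nhds.add (hdy.comp hφ.tendsto_atTop)
      have hle : ∀ k, dist (W (φ k)) x ≤ δ + dist (u (φ k)) y := by
        intro k
        have hyx : dist y x ≤ (1 - a) * δ := Metric.mem_closedBall.1 hy
        calc dist (W (φ k)) x ≤ dist (W (φ k)) (u (φ k)) + dist (u (φ k)) x :=
              dist_triangle _ _ _
          _ ≤ c + (dist (u (φ k)) y + dist y x) :=
              add_le_add (hW1 _) (dist_triangle _ _ _)
          _ ≤ c + (dist (u (φ k)) y + (1 - a) * δ) := by linarith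
          _ = δ + dist (u (φ k)) y := by rw [hc]; ring
      simpa using le_of_tendsto_of_tendsto' h1 h2 hle
    obtain ⟨p, -, ψ, hψ, hpt⟩ :=
      (isCompact_closedBall (0 : EuclideanSpace ℝ (Fin d)) L).tendsto_subseq
        (fun k => mem_closedBall_zero_iff.2 (grad_bound hL hflip (hW2 (φ k))))
    have hpG : p ∈ goldstein f δ x := by
      refine subset_convexHull ℝ _ ?_
      refine Set.mem_iUnion₂.2 ⟨wbar, Metric.mem_closedBall.2 hwbar_le, ?_⟩
      exact subset_convexHull ℝ _
        ⟨W ∘ φ ∘ ψ, hWt.comp hψ.tendsto_atTop, fun k => hW2 _, hpt⟩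
    have hgrad_u : Tendsto (fun k => (inner ℝ (gradient F (u k)) v : ℝ)) atTop
        (nhds (inner ℝ g' v)) := hugrad.inner tendsto_const_nhds
    have hfin : (inner ℝ g' v : ℝ) ≤ inner ℝ p v := by
      have hL1 : Tendsto (fun k => (inner ℝ (gradient F (u (φ (ψ k)))) v : ℝ)) atTop
          (nhds (inner ℝ g' v)) := hgrad_u.comp (hφ.comp hψ).tendsto_atTop
      have hR1 : Tendsto (fun k => (inner ℝ (gradient f (W (φ (ψ k)))) v : ℝ)
          + ((φ (ψ k) : ℝ) + 1)⁻¹) atTop (nhds (inner ℝ p v + 0)) := by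
        refine Tendsto.add (hpt.inner tendsto_const_nhds) ?_
        have hmono : ∀ k : ℕ, ((φ (ψ k) : ℝ) + 1)⁻¹ ≤ ((k:ℝ)+1)⁻¹ := by
          intro k
          have hk : k ≤ φ (ψ k) := (hφ.comp hψ).le_apply
          have : (k : ℝ) + 1 ≤ (φ (ψ k) : ℝ) + 1 := by
            have := (Nat.cast_le (α := ℝ)).2 hk
            linarith
          exact inv_anti₀ (by positivity) this
        refine squeeze_zero (fun k => by positivity) hmono
          (tendsto_one_div_add_atTop_nhds_zero_nat.congr (by intro k; rw [one_div]))
      have hle : ∀ k, (inner ℝ (gradient F (u (φ (ψ k)))) v : ℝ) ≤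
          inner ℝ (gradient f (W (φ (ψ k)))) v + ((φ (ψ k) : ℝ) + 1)⁻¹ := fun k => hW3 _
      simpa using le_of_tendsto_of_tendsto' hL1 hR1 hle
    have h2 := hlt p (subset_closure hpG)
    rw [← hℓ g', ← hℓ p] at *
    have e1 : (inner ℝ v g' : ℝ) = inner ℝ g' v := real_inner_comm _ _
    have e2 : (inner ℝ v p : ℝ) = inner ℝ p v := real_inner_comm _ _
    linarith [hccg, hlt p (subset_closure hpG)]
  have hgc : g ∈ closure (goldstein f δ x) := hincl hg
  have hbdd : BddBelow (norm '' goldstein f δ x) := by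
    refine ⟨0, ?_⟩
    rintro b ⟨q, -, rfl⟩
    exact norm_nonneg q
  refine le_of_forall_pos_le_add fun ε hε => ?_
  obtain ⟨g2, hg2, hd2⟩ := Metric.mem_closure_iff.1 hgc ε hε
  calc sInf (norm '' goldstein f δ x) ≤ ‖g2‖ := csInf_le hbdd (Set.mem_image_of_mem _ hg2)
    _ ≤ ‖g‖ + ε := by
        have h3 : ‖g2‖ - ‖g‖ ≤ ‖g2 - g‖ := norm_sub_norm_le _ _
        have h4 : ‖g2 - g‖ = dist g g2 := by rw [dist_comm, dist_eq_norm]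
        linarith
end

section
/- In the decentralized recursion y_t = (P ⊗ I) y_{t-1} + ζ_t with y_0 = 0, where P is symmetric doubly stochastic with second singular value ρ < 1 and each block ζ_{τ,j} ∈ ℝ^d satisfies ‖ζ_{τ,j}‖ ≤ D, the deviation of agent i's iterate from the average satisfies ‖y_{t,i} - ȳ_t‖ ≤ D√n/(1-ρ) for all t and i, where ȳ_t = (1/n) Σⱼ y_{t,j}. -/
open Finset




/-- Minkowski inequality for blockwise l2 norms. -/
lemma minkowski_aux {n : ℕ} {E : Type*} [SeminormedAddCommGroup E]
    (a b : Fin n → E) :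
    Real.sqrt (∑ i, ‖a i + b i‖^2) ≤
      Real.sqrt (∑ i, ‖a i‖^2) + Real.sqrt (∑ i, ‖b i‖^2) := by
  have hB : (0:ℝ) ≤ ∑ i, ‖a i‖^2 := by positivity
  have hC : (0:ℝ) ≤ ∑ i, ‖b i‖^2 := by positivity
  rw [show Real.sqrt (∑ i, ‖a i‖^2) + Real.sqrt (∑ i, ‖b i‖^2) =
      Real.sqrt ((Real.sqrt (∑ i, ‖a i‖^2) + Real.sqrt (∑ i, ‖b i‖^2))^2) from
    (Real.sqrt_sq (by positivity)).symm]
  apply Real.sqrt_le_sqrt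
  have cs := Real.sum_mul_le_sqrt_mul_sqrt (Finset.univ : Finset (Fin n))
      (fun i => ‖a i‖) (fun i => ‖b i‖)
  have h1 : ∑ i, ‖a i + b i‖^2 ≤ ∑ i, (‖a i‖ + ‖b i‖)^2 :=
    Finset.sum_le_sum fun i _ =>
      pow_le_pow_left₀ (norm_nonneg _) (norm_add_le _ _) 2
  calc ∑ i, ‖a i + b i‖^2 ≤ ∑ i, (‖a i‖ + ‖b i‖)^2 := h1
    _ = (∑ i, ‖a i‖^2) + 2 * (∑ i, ‖a i‖ * ‖b i‖) + (∑ i, ‖b i‖^2) := by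
        simp_rw [add_sq]; rw [Finset.sum_add_distrib, Finset.sum_add_distrib,
          Finset.mul_sum]; ring_nf
    _ ≤ (∑ i, ‖a i‖^2) + 2 * (Real.sqrt (∑ i, ‖a i‖^2) * Real.sqrt (∑ i, ‖b i‖^2))
        + (∑ i, ‖b i‖^2) := by
        gcongr
    _ = (Real.sqrt (∑ i, ‖a i‖^2) + Real.sqrt (∑ i, ‖b i‖^2))^2 := by
        rw [add_sq, Real.sq_sqrt hB, Real.sq_sqrt hC]; ring


/-- Blockwise contraction: coordinate-wise application of the scalar contraction. -/
lemma block_contract {n d : ℕ} (P : Matrix (Fin n) (Fin n) ℝ) (ρ : ℝ) (hρ0 : 0 ≤ ρ)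
    (hcontract : ∀ v : Fin n → ℝ, (∑ j, v j) = 0 →
      Real.sqrt (∑ i, (P.mulVec v i) ^ 2) ≤ ρ * Real.sqrt (∑ i, (v i) ^ 2))
    (z : Fin n → EuclideanSpace ℝ (Fin d)) (hz : ∑ j, z j = 0) :
    Real.sqrt (∑ i, ‖∑ j, P i j • z j‖^2) ≤ ρ * Real.sqrt (∑ i, ‖z i‖^2) := by
  have hnorm : ∀ (x : EuclideanSpace ℝ (Fin d)), ‖x‖^2 = ∑ k, (x k)^2 := by
    intro x
    rw [EuclideanSpace.norm_eq, Real.sq_sqrt (by positivity)]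
    exact Finset.sum_congr rfl fun k _ => by rw [Real.norm_eq_abs, sq_abs]
  have sum_app : ∀ (w : Fin n → EuclideanSpace ℝ (Fin d)) (k : Fin d),
      (∑ j, w j) k = ∑ j, w j k := by
    intro w k
    rw [WithLp.ofLp_sum]
    exact Finset.sum_apply k Finset.univ _
  have happ : ∀ i k, (∑ j, P i j • z j) k = P.mulVec (fun j => z j k) i := by
    intro i k
    rw [sum_app]
    simp [Matrix.mulVec, dotProduct]
  have hzk : ∀ k, (∑ j : Fin n, z j k) = 0 := by
    intro k
    rw [← sum_app, hz]
    rfl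
  have key : ∑ i, ‖∑ j, P i j • z j‖^2 ≤ ρ^2 * ∑ i, ‖z i‖^2 := by
    calc ∑ i, ‖∑ j, P i j • z j‖^2
        = ∑ i, ∑ k, (P.mulVec (fun j => z j k) i)^2 := by
          refine Finset.sum_congr rfl fun i _ => ?_
          rw [hnorm]
          exact Finset.sum_congr rfl fun k _ => by rw [happ]
      _ = ∑ k, ∑ i, (P.mulVec (fun j => z j k) i)^2 := Finset.sum_comm
      _ ≤ ∑ k : Fin d, ρ^2 * ∑ j, (z j k)^2 := by
          apply Finset.sum_le_sum
          intro k _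
          have h := hcontract (fun j => z j k) (hzk k)
          have hL : (0:ℝ) ≤ ∑ i, (P.mulVec (fun j => z j k) i)^2 := by positivity
          have hR : (0:ℝ) ≤ ∑ j, (z j k)^2 := by positivity
          have h2 := mul_self_le_mul_self (Real.sqrt_nonneg _) h
          rw [Real.mul_self_sqrt hL] at h2
          calc ∑ i, (P.mulVec (fun j => z j k) i)^2
              ≤ (ρ * Real.sqrt (∑ j, (z j k)^2)) * (ρ * Real.sqrt (∑ j, (z j k)^2)) := h2
            _ = ρ^2 * ∑ j, (z j k)^2 := by
                rw [show (ρ * Real.sqrt (∑ j, (z j k)^2)) * (ρ * Real.sqrt (∑ j, (z j k)^2))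
                  = ρ^2 * (Real.sqrt (∑ j, (z j k)^2) * Real.sqrt (∑ j, (z j k)^2)) by ring,
                  Real.mul_self_sqrt hR]
      _ = ρ^2 * ∑ i, ‖z i‖^2 := by
          rw [Finset.mul_sum]
          simp_rw [hnorm, Finset.mul_sum]
          exact Finset.sum_comm
  calc Real.sqrt (∑ i, ‖∑ j, P i j • z j‖^2) ≤ Real.sqrt (ρ^2 * ∑ i, ‖z i‖^2) :=
        Real.sqrt_le_sqrt key
    _ = ρ * Real.sqrt (∑ i, ‖z i‖^2) := by
        rw [Real.sqrt_mul (by positivity), Real.sqrt_sq hρ0]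

/-- Variance inequality: centered second moment is at most the second moment. -/
lemma centered_sq_sum_le {n : ℕ} {E : Type*} [NormedAddCommGroup E]
    [InnerProductSpace ℝ E] (x : Fin n → E) (m : E)
    (h : ∑ i, (x i - m) = 0) :
    ∑ i, ‖x i - m‖^2 ≤ ∑ i, ‖x i‖^2 := by
  have expand : ∀ i, ‖x i‖^2
      = ‖x i - m‖^2 + 2 * (inner ℝ (x i - m) m : ℝ) + ‖m‖^2 := by
    intro i
    have := @norm_add_sq_real E _ _ (x i - m) m
    simpa using this
  have hcross : ∑ i, (2:ℝ) * (inner ℝ (x i - m) m : ℝ) = 0 := by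
    rw [← Finset.mul_sum, ← sum_inner, h, inner_zero_left, mul_zero]
  have htot : ∑ i, ‖x i‖^2
      = (∑ i, ‖x i - m‖^2) + (∑ i, (2:ℝ) * (inner ℝ (x i - m) m : ℝ))
        + ∑ _i : Fin n, ‖m‖^2 := by
    simp_rw [expand, Finset.sum_add_distrib]
  rw [hcross, add_zero] at htot
  rw [htot]
  have : (0:ℝ) ≤ ∑ _i : Fin n, ‖m‖^2 := by positivity
  linarith


/-- Consensus error bound: in the recursion `y_{t,i} = ∑_j P_{ij} y_{t-1,j} + ζ_{t,i}`
with `y_0 = 0`, blocks bounded by `D`, and `P` symmetric doubly stochastic with second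
singular value at most `ρ < 1` (expressed as a contraction on mean-zero vectors),
each agent's deviation from the average satisfies `‖y_{t,i} - ȳ_t‖ ≤ D√n/(1-ρ)`. -/
theorem consensus_error_bound {d n : ℕ} (hn : 0 < n)
    (P : Matrix (Fin n) (Fin n) ℝ) (hsymm : P.IsSymm) (hnonneg : ∀ i j, 0 ≤ P i j)
    (hrow : ∀ i, ∑ j, P i j = 1) (hcol : ∀ j, ∑ i, P i j = 1)
    (ρ D : ℝ) (hρ0 : 0 ≤ ρ) (hρ1 : ρ < 1) (hD : 0 ≤ D)
    (hcontract : ∀ v : Fin n → ℝ, (∑ j, v j) = 0 →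
      Real.sqrt (∑ i, (P.mulVec v i) ^ 2) ≤ ρ * Real.sqrt (∑ i, (v i) ^ 2))
    (y ζ : ℕ → Fin n → EuclideanSpace ℝ (Fin d))
    (h0 : ∀ i, y 0 i = 0)
    (hrec : ∀ t i, y (t + 1) i = (∑ j, P i j • y t j) + ζ (t + 1) i)
    (hζ : ∀ t i, ‖ζ t i‖ ≤ D) :
    ∀ (t : ℕ) (i : Fin n),
      ‖y t i - (1 / n : ℝ) • ∑ j, y t j‖ ≤ D * Real.sqrt n / (1 - ρ) := by
  have hn' : (n:ℝ) ≠ 0 := Nat.cast_ne_zero.mpr hn.ne'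
  have h1ρ : (0:ℝ) < 1 - ρ := by linarith
  set B : ℝ := D * Real.sqrt n / (1 - ρ) with hB
  have hBnn : 0 ≤ B := by positivity
  set z : ℕ → Fin n → EuclideanSpace ℝ (Fin d) :=
    fun t i => y t i - (1 / n : ℝ) • ∑ j, y t j with hzdef
  -- deviations sum to zero
  have hcenter : ∀ (x : Fin n → EuclideanSpace ℝ (Fin d)),
      ∑ i, (x i - (1 / n : ℝ) • ∑ j, x j) = 0 := by
    intro x
    rw [Finset.sum_sub_distrib, Finset.sum_const, Finset.card_univ, Fintype.card_fin]
    rw [← Nat.cast_smul_eq_nsmul ℝ, smul_smul]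
    rw [show (n:ℝ) * (1/n) = 1 by field_simp]
    simp
  have hzsum : ∀ t, ∑ j, z t j = 0 := fun t => hcenter (y t)
  -- average recursion
  have hSrec : ∀ t, ∑ j, y (t+1) j = (∑ j, y t j) + ∑ j, ζ (t+1) j := by
    intro t
    simp_rw [hrec t]
    rw [Finset.sum_add_distrib]
    congr 1
    rw [Finset.sum_comm]
    refine Finset.sum_congr rfl fun i _ => ?_
    rw [← Finset.sum_smul, hcol i, one_smul]
  -- deviation recursion
  have hzrec : ∀ t i, z (t+1) i = (∑ j, P i j • z t j)
      + (ζ (t+1) i - (1 / n : ℝ) • ∑ j, ζ (t+1) j) := by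
    intro t i
    have hP : ∑ j, P i j • z t j
        = (∑ j, P i j • y t j) - (1 / n : ℝ) • ∑ j, y t j := by
      simp_rw [hzdef, smul_sub]
      rw [Finset.sum_sub_distrib]
      congr 1
      rw [← Finset.sum_smul, hrow i, one_smul]
    rw [hP, hzdef]
    simp only [hrec t i, hSrec t]
    rw [smul_add]
    abel
  -- energy bound by induction
  have hE : ∀ t, Real.sqrt (∑ i, ‖z t i‖^2) ≤ B := by
    intro t
    induction t with
    | zero =>
      have : ∀ i, z 0 i = 0 := by
        intro i
        simp [hzdef, h0]
      simp [this]
      exact hBnn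
    | succ t ih =>
      set w : Fin n → EuclideanSpace ℝ (Fin d) :=
        fun i => ζ (t+1) i - (1 / n : ℝ) • ∑ j, ζ (t+1) j with hw
      have hwsum : ∑ i, w i = 0 := hcenter (ζ (t+1))
      have hwb : Real.sqrt (∑ i, ‖w i‖^2) ≤ D * Real.sqrt n := by
        have h1 : ∑ i, ‖w i‖^2 ≤ ∑ i, ‖ζ (t+1) i‖^2 :=
          centered_sq_sum_le (ζ (t+1)) _ hwsum
        have h2 : ∑ i, ‖ζ (t+1) i‖^2 ≤ ∑ _i : Fin n, D^2 :=
          Finset.sum_le_sum fun i _ =>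
            pow_le_pow_left₀ (norm_nonneg _) (hζ (t+1) i) 2
        have h3 : (∑ _i : Fin n, D^2) = (n:ℝ) * D^2 := by
          rw [Finset.sum_const, Finset.card_univ, Fintype.card_fin, nsmul_eq_mul]
        calc Real.sqrt (∑ i, ‖w i‖^2) ≤ Real.sqrt ((n:ℝ) * D^2) := by
              apply Real.sqrt_le_sqrt; rw [← h3]; exact le_trans h1 h2
          _ = D * Real.sqrt n := by
              rw [Real.sqrt_mul (by positivity), Real.sqrt_sq hD]; ring
      have hPz := block_contract P ρ hρ0 hcontract (z t) (hzsum t)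
      have step : Real.sqrt (∑ i, ‖z (t+1) i‖^2)
          ≤ ρ * Real.sqrt (∑ i, ‖z t i‖^2) + D * Real.sqrt n := by
        calc Real.sqrt (∑ i, ‖z (t+1) i‖^2)
            = Real.sqrt (∑ i, ‖(∑ j, P i j • z t j) + w i‖^2) := by
              congr 1; exact Finset.sum_congr rfl fun i _ => by rw [hzrec t i]
          _ ≤ Real.sqrt (∑ i, ‖∑ j, P i j • z t j‖^2)
              + Real.sqrt (∑ i, ‖w i‖^2) :=
              minkowski_aux (fun i => ∑ j, P i j • z t j) w
          _ ≤ ρ * Real.sqrt (∑ i, ‖z t i‖^2) + D * Real.sqrt n := by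
              exact add_le_add hPz hwb
      have hfix : ρ * B + D * Real.sqrt n = B := by
        rw [hB]; field_simp; ring
      calc Real.sqrt (∑ i, ‖z (t+1) i‖^2)
          ≤ ρ * Real.sqrt (∑ i, ‖z t i‖^2) + D * Real.sqrt n := step
        _ ≤ ρ * B + D * Real.sqrt n := by
            have := mul_le_mul_of_nonneg_left ih hρ0
            linarith
        _ = B := hfix
  intro t i
  have h1 : ‖z t i‖ = Real.sqrt (‖z t i‖^2) := (Real.sqrt_sq (norm_nonneg _)).symm
  have h2 : ‖z t i‖^2 ≤ ∑ j, ‖z t j‖^2 :=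
    Finset.single_le_sum (f := fun j => ‖z t j‖^2) (fun j _ => by positivity)
      (Finset.mem_univ i)
  calc ‖y t i - (1 / n : ℝ) • ∑ j, y t j‖ = ‖z t i‖ := rfl
    _ ≤ Real.sqrt (∑ j, ‖z t j‖^2) := by rw [h1]; exact Real.sqrt_le_sqrt h2
    _ ≤ B := hE t
end
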